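/- Consider n agents with ideal group sizes s_1 ≤ s_2 ≤ … ≤ s_n, a budget α of exclusions, and a monotone cost function cost : ℕ × ℕ → ℝ that fulfills the quadrangle inequality and the reverse quadrangle inequality. Then among all solutions with at most α exclusions there exists one of minimum utilitarian social cost that is size-monotonic. -/

import Mathlib

/-!
Monotonicity and the two quadrangle inequalities combine into the Monge inequality
`cost a c + cost b d ≤ cost a d + cost b c` for all `a ≤ b` and `c ≤ d`. So if agents `i < j`
sit in coalitions of sizes `|π(i)| > |π(j)|`, exchanging the two agents does not increase the
social cost, while it strictly increases the moment `∑ₖ k · |π(k)|`. A feasible solution that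
minimizes the cost and, among those, maximizes the moment is therefore size-monotonic.
-/

open Finset

theorem cost_monge_of_quadrangle {ι : Type*} [LinearOrder ι] (cost : ι → ι → ℝ)
    (hmono : ∀ p a b : ι, (p ≤ a ∧ a ≤ b) ∨ (b ≤ a ∧ a ≤ p) → cost p a ≤ cost p b)
    (hquad : ∀ a b c d : ι, a ≤ b → b ≤ c → c ≤ d →
      cost a c + cost b d ≤ cost a d + cost b c)
    (hrquad : ∀ a b c d : ι, d ≤ c → c ≤ b → b ≤ a →
      cost a c + cost b d ≤ cost a d + cost b c)
    {a b c d : ι} (hab : a ≤ b) (hcd : c ≤ d) :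
    cost a c + cost b d ≤ cost a d + cost b c := by
  rcases le_total c a with hca | hac
  · rcases le_total d a with hda | had
    · linarith [hrquad b a d c hcd hda hab]
    rcases le_total d b with hdb | hbd
    · linarith [hrquad b a a c hca le_rfl hab, hmono a a d (.inl ⟨le_rfl, had⟩),
        hmono b d a (.inr ⟨had, hdb⟩)]
    · linarith [hrquad b a a c hca le_rfl hab, hquad a b b d hab le_rfl hbd,
        hmono a a b (.inl ⟨le_rfl, hab⟩), hmono b b a (.inr ⟨hab, le_rfl⟩)]
  · rcases le_total d b with hdb | hbd
    · linarith [hmono a c d (.inl ⟨hac, hcd⟩), hmono b d c (.inr ⟨hcd, hdb⟩)]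
    rcases le_total c b with hcb | hbc
    · linarith [hmono a c b (.inl ⟨hac, hcb⟩), hquad a b b d hab le_rfl hbd,
        hmono b b c (.inr ⟨hcb, le_rfl⟩)]
    · linarith [hquad a b c d hab hbc hcd]

theorem Finset.sum_swap_apply {α M : Type*} [DecidableEq α] [AddCommGroup M] {s : Finset α}
    {i j : α} (hi : i ∈ s) (hj : j ∈ s) (hij : i ≠ j) (G : α → α → M) :
    ∑ k ∈ s, G (Equiv.swap i j k) k = ∑ k ∈ s, G k k + (G j i - G i i) + (G i j - G j j) := by
  rw [add_assoc, ← sub_eq_iff_eq_add', ← sum_sub_distrib,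
    sum_eq_add_of_mem i j hi hj hij fun k _ hk => by simp [Equiv.swap_apply_of_ne_of_ne hk.1 hk.2],
    Equiv.swap_apply_left, Equiv.swap_apply_right]

def Equiv.finsetOrderIso {α β : Type*} (e : α ≃ β) : Finset α ≃o Finset β :=
  ⟨e.finsetCongr, Finset.map_subset_map⟩

theorem Equiv.finsetOrderIso_apply {α β : Type*} (e : α ≃ β) (s : Finset α) :
    e.finsetOrderIso s = s.map e.toEmbedding :=
  rfl

theorem Equiv.setOf_swap_apply_ne_subset {α : Type*} [DecidableEq α] {s : Set α} {i j : α}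
    (hi : i ∈ s) (hj : j ∈ s) : {a | Equiv.swap i j a ≠ a} ⊆ s := fun a ha => by
  rcases (Equiv.swap_apply_ne_self_iff.1 ha).2 with rfl | rfl <;> assumption

namespace Finpartition

variable {α M : Type*} [DecidableEq α] {s : Finset α}

def permute (σ : Equiv.Perm α) (hσ : {a | σ a ≠ a} ⊆ s) (P : Finpartition s) :
    Finpartition s :=
  (P.map σ.finsetOrderIso).copy ((σ.finsetOrderIso_apply s).trans (map_perm hσ))

def totalCost [AddCommMonoid M] (c : α → ℕ → M) (P : Finpartition s) : M :=
  ∑ B ∈ P.parts, ∑ i ∈ B, c i #B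

theorem totalCost_eq_sum_part [AddCommMonoid M] (c : α → ℕ → M) (P : Finpartition s) :
    P.totalCost c = ∑ i ∈ s, c i #(P.part i) := by
  calc ∑ B ∈ P.parts, ∑ i ∈ B, c i #B = ∑ B ∈ P.parts, ∑ i ∈ id B, c i #(P.part i) :=
        sum_congr rfl fun B hB => sum_congr rfl fun i hi => by rw [P.part_eq_of_mem hB hi]
    _ = _ := by rw [← sum_biUnion P.supIndep.pairwiseDisjoint, P.biUnion_parts]

theorem totalCost_permute [AddCommMonoid M] (c : α → ℕ → M) (σ : Equiv.Perm α)
    (hσ : {a | σ a ≠ a} ⊆ s) (P : Finpartition s) :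
    (P.permute σ hσ).totalCost c = P.totalCost fun i => c (σ i) := by
  rw [totalCost, permute, copy_parts, parts_map, sum_map]
  exact sum_congr rfl fun B _ => by simp [Equiv.finsetOrderIso_apply]

theorem totalCost_permute_swap [AddCommGroup M] (c : α → ℕ → M) (P : Finpartition s)
    {i j : α} (hi : i ∈ s) (hj : j ∈ s) (hij : i ≠ j) :
    (P.permute (Equiv.swap i j) (Equiv.setOf_swap_apply_ne_subset hi hj)).totalCost c =
      P.totalCost c + (c j #(P.part i) - c i #(P.part i)) +
        (c i #(P.part j) - c j #(P.part j)) := by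
  rw [totalCost_permute, totalCost_eq_sum_part, totalCost_eq_sum_part,
    sum_swap_apply hi hj hij fun a k => c a #(P.part k)]

def moment {n : ℕ} {A : Finset (Fin n)} (P : Finpartition A) : ℝ :=
  P.totalCost fun (k : Fin n) l => ((k : ℕ) : ℝ) * l

theorem exists_totalCost_le_moment_lt_of_card_part_lt {n : ℕ} {A : Finset (Fin n)}
    (P : Finpartition A) {cost : ℕ → ℕ → ℝ}
    (hmonge : ∀ {a b c d : ℕ}, a ≤ b → c ≤ d → cost a c + cost b d ≤ cost a d + cost b c)
    {s : Fin n → ℕ} (hs : Monotone s) {i j : Fin n}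
    (hi : i ∈ A) (hj : j ∈ A) (hij : i < j) (hcard : #(P.part j) < #(P.part i)) :
    ∃ P' : Finpartition A, P'.totalCost (fun k => cost (s k)) ≤ P.totalCost (fun k => cost (s k)) ∧
      P.moment < P'.moment := by
  refine ⟨P.permute (Equiv.swap i j) (Equiv.setOf_swap_apply_ne_subset hi hj), ?_, ?_⟩
  · rw [totalCost_permute_swap _ _ hi hj hij.ne]
    linarith [hmonge (hs hij.le) hcard.le]
  · rw [moment, moment, totalCost_permute_swap _ _ hi hj hij.ne]
    have hij' : ((i : ℕ) : ℝ) < (j : ℕ) := by exact_mod_cast hij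
    have hcard' : (#(P.part j) : ℝ) < #(P.part i) := by exact_mod_cast hcard
    nlinarith

end Finpartition

/-- for `n` agents with monotone ideal sizes `s`, a budget `α` of
exclusions, and a monotone cost function fulfilling the quadrangle and reverse
quadrangle inequalities, there is a size-monotonic solution with at most `α`
exclusions whose utilitarian social cost is minimum among all solutions with
at most `α` exclusions. -/
theorem exists_size_monotonic_utilitarian_optimum (n α : ℕ)
    (s : Fin n → ℕ) (hs : Monotone s) (cost : ℕ → ℕ → ℝ)
    (hmono : ∀ p a b : ℕ, (p ≤ a ∧ a ≤ b) ∨ (b ≤ a ∧ a ≤ p) →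
      cost p a ≤ cost p b)
    (hquad : ∀ a b c d : ℕ, a ≤ b → b ≤ c → c ≤ d →
      cost a c + cost b d ≤ cost a d + cost b c)
    (hrquad : ∀ a b c d : ℕ, d ≤ c → c ≤ b → b ≤ a →
      cost a c + cost b d ≤ cost a d + cost b c) :
    ∃ (P : Finset (Fin n)) (π : Finpartition P),
      (Finset.univ \ P).card ≤ α ∧
      (∀ i j : Fin n, i < j → ∀ B ∈ π.parts, i ∈ B →
        ∀ B' ∈ π.parts, j ∈ B' → B.card ≤ B'.card) ∧
      (∀ (Q : Finset (Fin n)) (σ : Finpartition Q),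
        (Finset.univ \ Q).card ≤ α →
          ∑ B ∈ π.parts, ∑ i ∈ B, cost (s i) B.card ≤
            ∑ B ∈ σ.parts, ∑ i ∈ B, cost (s i) B.card) := by
  let Solution := {x : Σ P : Finset (Fin n), Finpartition P // #(univ \ x.1) ≤ α}
  have : Nonempty Solution := ⟨⟨⟨univ, ⊥⟩, by simp⟩⟩
  obtain ⟨⟨⟨P, π⟩, hP⟩, hmin⟩ := Finite.exists_min fun x : Solution =>
    toLex (x.1.2.totalCost (fun k => cost (s k)), -x.1.2.moment)
  refine ⟨P, π, hP, fun i j hij B hB hiB B' hB' hjB' => ?_, fun Q σ hQ =>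
    (Prod.Lex.toLex_le_toLex'.1 (hmin ⟨⟨Q, σ⟩, hQ⟩)).1⟩
  rw [← π.part_eq_of_mem hB hiB, ← π.part_eq_of_mem hB' hjB']
  by_contra! hcard
  obtain ⟨π', hcost, hmoment⟩ := π.exists_totalCost_le_moment_lt_of_card_part_lt
    (cost_monge_of_quadrangle cost hmono hquad hrquad) hs (π.le hB hiB) (π.le hB' hjB') hij hcard
  exact (hmin ⟨⟨P, π'⟩, hP⟩).not_gt
    (Prod.Lex.toLex_lt_toLex'.2 ⟨hcost, fun _ => neg_lt_neg hmoment⟩)
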